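/- arXiv:1705.04206 — 3 statements merged into one kernel-verified Lean document; each statement's English description precedes it below -/
import Mathlib

section
/- For all c>0 and μ∈ℝ\{0}, the Weinstein quantity ∂_c M[Q_{c,μ}] equals √c/(c+2μ²), which is strictly positive. -/
/-!
With `a = √2 μ` the mass is `2√c − 2a·arctan(√c / a)`. The arctan term has `c`-derivative
`a² / (√c (c + a²))`, so `∂_c M = 1/√c − a² / (√c (c + a²)) = √c / (c + a²)`.
-/

open Real

/-- Mass of the Gardner soliton as a function of the scaling `c`. -/
noncomputable def gardnerSolitonMass (μ c : ℝ) : ℝ :=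
  2 * Real.sqrt c - 2 * Real.sqrt 2 * μ * Real.arctan (Real.sqrt c / (Real.sqrt 2 * μ))

/- For `a = 0` both sides vanish, since `√x / 0 = 0` and `arctan 0 = 0`. -/
theorem hasDerivAt_mul_arctan_sqrt_div (a : ℝ) {x : ℝ} (hx : 0 < x) :
    HasDerivAt (fun y => a * arctan (√y / a)) (a ^ 2 / (2 * √x * (x + a ^ 2))) x := by
  rcases eq_or_ne a 0 with rfl | ha
  · simpa using hasDerivAt_const x (0 : ℝ)
  have hs : 0 < √x := sqrt_pos.2 hx
  have hsq : √x ^ 2 = x := sq_sqrt hx.le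
  have hchain := ((hasDerivAt_sqrt hx.ne').div_const a).arctan.const_mul a
  refine hchain.congr_deriv ?_
  rw [div_pow, hsq]
  field_simp
  ring

theorem hasDerivAt_two_sqrt_sub_two_mul_arctan_sqrt_div (a : ℝ) {x : ℝ} (hx : 0 < x) :
    HasDerivAt (fun y => 2 * √y - 2 * (a * arctan (√y / a))) (√x / (x + a ^ 2)) x := by
  have hs : 0 < √x := sqrt_pos.2 hx
  have hsq : √x ^ 2 = x := sq_sqrt hx.le
  have hden : 0 < x + a ^ 2 := by positivity
  refine (((hasDerivAt_sqrt hx.ne').const_mul 2).sub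
    ((hasDerivAt_mul_arctan_sqrt_div a hx).const_mul 2)).congr_deriv ?_
  field_simp
  rw [hsq]
  ring

theorem gardner_soliton_weinstein_mass_general (c μ : ℝ) (hc : 0 < c) :
    HasDerivAt (gardnerSolitonMass μ) (Real.sqrt c / (c + 2 * μ ^ 2)) c ∧
    0 < Real.sqrt c / (c + 2 * μ ^ 2) := by
  have hmass : gardnerSolitonMass μ =
      fun y => 2 * √y - 2 * ((√2 * μ) * arctan (√y / (√2 * μ))) := by
    funext y
    rw [gardnerSolitonMass]
    ring
  have hscale : (√2 * μ) ^ 2 = 2 * μ ^ 2 := by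
    rw [mul_pow, sq_sqrt zero_le_two]
  refine ⟨?_, div_pos (sqrt_pos.2 hc) (by positivity)⟩
  rw [hmass, ← hscale]
  exact hasDerivAt_two_sqrt_sub_two_mul_arctan_sqrt_div _ hc

theorem gardner_soliton_weinstein_mass (c μ : ℝ) (hc : 0 < c) (hμ : μ ≠ 0) :
    HasDerivAt (gardnerSolitonMass μ) (Real.sqrt c / (c + 2 * μ ^ 2)) c ∧
    0 < Real.sqrt c / (c + 2 * μ ^ 2) :=
  gardner_soliton_weinstein_mass_general c μ hc
end

section
/- Let α,β>0 and 0 < μ < sqrt((α²+β²)/2), with Δ = α²+β²−2μ². Then the quantity 32α²β(1 + 2μ²Δ/(Δ²+8μ²β²)) is strictly positive, and the quantity −16β((α²−β²) + (α²+β²+2μ²)(Δ²+2μ²Δ+4μ²β²)/(Δ²+8μ²β²)) is strictly negative. -/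
theorem gardner_breather_quadratic_form_scaling_signs (α β μ : ℝ)
    (hα : 0 < α) (hβ : 0 < β) (hμ0 : 0 < μ)
    (hμ : μ < Real.sqrt ((α ^ 2 + β ^ 2) / 2)) :
    0 < 32 * α ^ 2 * β *
        (1 + 2 * μ ^ 2 * (α ^ 2 + β ^ 2 - 2 * μ ^ 2) /
          ((α ^ 2 + β ^ 2 - 2 * μ ^ 2) ^ 2 + 8 * μ ^ 2 * β ^ 2)) ∧
    -16 * β * ((α ^ 2 - β ^ 2) + (α ^ 2 + β ^ 2 + 2 * μ ^ 2) *
        ((α ^ 2 + β ^ 2 - 2 * μ ^ 2) ^ 2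
          + 2 * μ ^ 2 * (α ^ 2 + β ^ 2 - 2 * μ ^ 2) + 4 * μ ^ 2 * β ^ 2) /
        ((α ^ 2 + β ^ 2 - 2 * μ ^ 2) ^ 2 + 8 * μ ^ 2 * β ^ 2)) < 0 := by
  have hμ2 : μ ^ 2 < (α ^ 2 + β ^ 2) / 2 := by
    have := (Real.lt_sqrt hμ0.le).mp hμ
    linarith
  have hΔ : 0 < α ^ 2 + β ^ 2 - 2 * μ ^ 2 := by linarith
  set Δ := α ^ 2 + β ^ 2 - 2 * μ ^ 2 with hΔdef
  have hD : 0 < Δ ^ 2 + 8 * μ ^ 2 * β ^ 2 := by positivity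
  constructor
  · have h1 : 0 < 2 * μ ^ 2 * Δ / (Δ ^ 2 + 8 * μ ^ 2 * β ^ 2) :=
      div_pos (by positivity) hD
    have h2 : 0 < 1 + 2 * μ ^ 2 * Δ / (Δ ^ 2 + 8 * μ ^ 2 * β ^ 2) := by linarith
    positivity
  · have hE : 0 < (α ^ 2 - β ^ 2) * (Δ ^ 2 + 8 * μ ^ 2 * β ^ 2) +
        (α ^ 2 + β ^ 2 + 2 * μ ^ 2) * (Δ ^ 2 + 2 * μ ^ 2 * Δ + 4 * μ ^ 2 * β ^ 2) := by
      have hid : (α ^ 2 - β ^ 2) * (Δ ^ 2 + 8 * μ ^ 2 * β ^ 2) +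
          (α ^ 2 + β ^ 2 + 2 * μ ^ 2) * (Δ ^ 2 + 2 * μ ^ 2 * Δ + 4 * μ ^ 2 * β ^ 2)
          = 2 * α ^ 2 * (Δ ^ 2 + 2 * μ ^ 2 * Δ + 8 * μ ^ 2 * β ^ 2) := by
        rw [hΔdef]; ring
      rw [hid]; positivity
    have key : 0 < (α ^ 2 - β ^ 2) + (α ^ 2 + β ^ 2 + 2 * μ ^ 2) *
        (Δ ^ 2 + 2 * μ ^ 2 * Δ + 4 * μ ^ 2 * β ^ 2) /
        (Δ ^ 2 + 8 * μ ^ 2 * β ^ 2) := by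
      have h := div_pos hE hD
      have heq : ((α ^ 2 - β ^ 2) * (Δ ^ 2 + 8 * μ ^ 2 * β ^ 2) +
          (α ^ 2 + β ^ 2 + 2 * μ ^ 2) * (Δ ^ 2 + 2 * μ ^ 2 * Δ + 4 * μ ^ 2 * β ^ 2)) /
          (Δ ^ 2 + 8 * μ ^ 2 * β ^ 2)
          = (α ^ 2 - β ^ 2) + (α ^ 2 + β ^ 2 + 2 * μ ^ 2) *
          (Δ ^ 2 + 2 * μ ^ 2 * Δ + 4 * μ ^ 2 * β ^ 2) /
          (Δ ^ 2 + 8 * μ ^ 2 * β ^ 2) := by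
        field_simp
      rwa [heq] at h
    exact mul_neg_of_neg_of_pos (by linarith) key
end

section
/- Let α,β>0, 0<μ<sqrt((α²+β²)/2), Δ = α²+β²−2μ². Then the combination (α·∂_βM[B_μ] + β·∂_αM[B_μ])/(8αβ(α²+β²)) equals (1/(2β(α²+β²)))·(Δ²+2μ²Δ)/(Δ²+8μ²β²), which is strictly positive. -/
theorem gardner_breather_B0_pairing (α β μ : ℝ)
    (hα : 0 < α) (hβ : 0 < β) (hμ0 : 0 < μ)
    (hμ : μ < Real.sqrt ((α ^ 2 + β ^ 2) / 2)) :
    (α * (4 * ((α ^ 2 + β ^ 2 - 2 * μ ^ 2) ^ 2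
            + 2 * μ ^ 2 * (α ^ 2 + β ^ 2 - 2 * μ ^ 2) + 4 * μ ^ 2 * β ^ 2) /
          ((α ^ 2 + β ^ 2 - 2 * μ ^ 2) ^ 2 + 8 * μ ^ 2 * β ^ 2))
        + β * (-16 * μ ^ 2 * β * α /
          ((α ^ 2 + β ^ 2 - 2 * μ ^ 2) ^ 2 + 8 * μ ^ 2 * β ^ 2)))
      / (8 * α * β * (α ^ 2 + β ^ 2)) =
      (1 / (2 * β * (α ^ 2 + β ^ 2))) *
        (((α ^ 2 + β ^ 2 - 2 * μ ^ 2) ^ 2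
            + 2 * μ ^ 2 * (α ^ 2 + β ^ 2 - 2 * μ ^ 2)) /
          ((α ^ 2 + β ^ 2 - 2 * μ ^ 2) ^ 2 + 8 * μ ^ 2 * β ^ 2)) ∧
    0 < (1 / (2 * β * (α ^ 2 + β ^ 2))) *
        (((α ^ 2 + β ^ 2 - 2 * μ ^ 2) ^ 2
            + 2 * μ ^ 2 * (α ^ 2 + β ^ 2 - 2 * μ ^ 2)) /
          ((α ^ 2 + β ^ 2 - 2 * μ ^ 2) ^ 2 + 8 * μ ^ 2 * β ^ 2)) := by
  have hμ2 : μ ^ 2 < (α ^ 2 + β ^ 2) / 2 := by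
    have := (Real.lt_sqrt hμ0.le).mp hμ
    linarith
  have hΔ : 0 < α ^ 2 + β ^ 2 - 2 * μ ^ 2 := by linarith
  have hD : 0 < (α ^ 2 + β ^ 2 - 2 * μ ^ 2) ^ 2 + 8 * μ ^ 2 * β ^ 2 := by positivity
  constructor
  · field_simp
    ring
  · have hnum : 0 < (α ^ 2 + β ^ 2 - 2 * μ ^ 2) ^ 2
        + 2 * μ ^ 2 * (α ^ 2 + β ^ 2 - 2 * μ ^ 2) := by positivity
    positivity
end
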